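/- arXiv:2601.10890 — 7 statements merged into one kernel-verified Lean document; each statement's English description precedes it below -/
import Mathlib

section
/- Let n ≥ 1 and let T be a real n×n matrix that factors as T = 𝓛₁ * ⋯ * 𝓛_p * 𝓤_q * ⋯ * 𝓤₁, where each 𝓛ᵢ is a positive lower-bidiagonal matrix and each 𝓤ⱼ is a positive upper-bidiagonal matrix. Then there exist normalized positive lower-bidiagonal matrices L₁, …, L_p, normalized positive upper-bidiagonal matrices U₁, …, U_q, and a diagonal matrix Δ all of whose diagonal entries are positive, such that T = L₁ * ⋯ * L_p * Δ * U_q * ⋯ * U₁. -/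
/-- An `n×n` real matrix `L` is positive lower-bidiagonal if `L i j = 0` whenever
`i ≠ j` and `i ≠ j+1`, and all diagonal and subdiagonal entries are positive. -/
def IsPosLowerBidiagonal {n : ℕ} (L : Matrix (Fin n) (Fin n) ℝ) : Prop :=
  (∀ i j : Fin n, (i : ℕ) ≠ (j : ℕ) → (i : ℕ) ≠ (j : ℕ) + 1 → L i j = 0) ∧
  (∀ i : Fin n, 0 < L i i) ∧
  (∀ i j : Fin n, (i : ℕ) = (j : ℕ) + 1 → 0 < L i j)

/-- An `n×n` real matrix `U` is positive upper-bidiagonal if `U i j = 0` whenever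
`j ≠ i` and `j ≠ i+1`, and all diagonal and superdiagonal entries are positive. -/
def IsPosUpperBidiagonal {n : ℕ} (U : Matrix (Fin n) (Fin n) ℝ) : Prop :=
  (∀ i j : Fin n, (j : ℕ) ≠ (i : ℕ) → (j : ℕ) ≠ (i : ℕ) + 1 → U i j = 0) ∧
  (∀ i : Fin n, 0 < U i i) ∧
  (∀ i j : Fin n, (j : ℕ) = (i : ℕ) + 1 → 0 < U i j)

/-- Normalized: moreover all diagonal entries are `1`. -/
def IsNormalizedPosLowerBidiagonal {n : ℕ} (L : Matrix (Fin n) (Fin n) ℝ) : Prop :=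
  IsPosLowerBidiagonal L ∧ ∀ i : Fin n, L i i = 1

def IsNormalizedPosUpperBidiagonal {n : ℕ} (U : Matrix (Fin n) (Fin n) ℝ) : Prop :=
  IsPosUpperBidiagonal U ∧ ∀ i : Fin n, U i i = 1

/-!
Write a positive lower-bidiagonal factor as `L * diagonal d` with `L` normalized and push
`diagonal d` into the next factor: scaling the rows keeps that factor positive lower-bidiagonal,
so the lower part is normalized from left to right, leaving one positive diagonal matrix on the
right. Transposition turns `𝓤_q⋯𝓤₁` into a product of positive lower-bidiagonal matrices, so the
upper part is the same statement with the diagonal matrix on the left.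
-/

open Matrix

namespace IsPosLowerBidiagonal

variable {n : ℕ} {A : Matrix (Fin n) (Fin n) ℝ} {d : Fin n → ℝ}

theorem diagonal_mul (hA : IsPosLowerBidiagonal A) (hd : ∀ i, 0 < d i) :
    IsPosLowerBidiagonal (diagonal d * A) := by
  obtain ⟨hzero, hdiag, hsub⟩ := hA
  refine ⟨fun i j h₁ h₂ => ?_, fun i => ?_, fun i j h => ?_⟩ <;> rw [Matrix.diagonal_mul]
  · rw [hzero i j h₁ h₂, mul_zero]
  · exact mul_pos (hd i) (hdiag i)
  · exact mul_pos (hd i) (hsub i j h)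

theorem mul_diagonal (hA : IsPosLowerBidiagonal A) (hd : ∀ i, 0 < d i) :
    IsPosLowerBidiagonal (A * diagonal d) := by
  obtain ⟨hzero, hdiag, hsub⟩ := hA
  refine ⟨fun i j h₁ h₂ => ?_, fun i => ?_, fun i j h => ?_⟩ <;> rw [Matrix.mul_diagonal]
  · rw [hzero i j h₁ h₂, zero_mul]
  · exact mul_pos (hdiag i) (hd i)
  · exact mul_pos (hsub i j h) (hd j)

theorem exists_normalized_mul_diagonal (hA : IsPosLowerBidiagonal A) :
    ∃ (L : Matrix (Fin n) (Fin n) ℝ) (d : Fin n → ℝ),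
      IsNormalizedPosLowerBidiagonal L ∧ (∀ i, 0 < d i) ∧ A = L * diagonal d := by
  refine ⟨A * diagonal fun i => (A i i)⁻¹, fun i => A i i,
    ⟨hA.mul_diagonal fun i => inv_pos.2 (hA.2.1 i), fun i => ?_⟩, hA.2.1, ?_⟩
  · rw [Matrix.mul_diagonal, mul_inv_cancel₀ (hA.2.1 i).ne']
  · rw [mul_assoc, diagonal_mul_diagonal]
    simp [inv_mul_cancel₀ (hA.2.1 _).ne']

end IsPosLowerBidiagonal

theorem exists_normalized_lower_prod_mul_diagonal {n : ℕ} :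
    ∀ {p : ℕ} (A : Fin p → Matrix (Fin n) (Fin n) ℝ), (∀ i, IsPosLowerBidiagonal (A i)) →
      ∃ (L : Fin p → Matrix (Fin n) (Fin n) ℝ) (d : Fin n → ℝ),
        (∀ i, IsNormalizedPosLowerBidiagonal (L i)) ∧ (∀ i, 0 < d i) ∧
          (List.ofFn A).prod = (List.ofFn L).prod * diagonal d
  | 0, _, _ => ⟨Fin.elim0, fun _ => 1, Fin.rec0, fun _ => one_pos, by simp⟩
  | p + 1, A, hA => by
    obtain ⟨L, e, hL, he, hprod⟩ :=
      exists_normalized_lower_prod_mul_diagonal _ fun i => hA (Fin.castSucc i)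
    obtain ⟨L₀, d, hL₀, hd, hlast⟩ :=
      ((hA (Fin.last p)).diagonal_mul he).exists_normalized_mul_diagonal
    refine ⟨Fin.snoc L L₀, d,
      fun i => Fin.lastCases (by simpa using hL₀) (by simpa using hL) i, hd, ?_⟩
    rw [List.ofFn_succ', List.ofFn_succ', List.prod_concat, List.prod_concat, hprod, mul_assoc,
      hlast]
    simp [mul_assoc]

theorem isPosLowerBidiagonal_transpose_iff {n : ℕ} {U : Matrix (Fin n) (Fin n) ℝ} :
    IsPosLowerBidiagonal Uᵀ ↔ IsPosUpperBidiagonal U := by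
  simp only [IsPosLowerBidiagonal, IsPosUpperBidiagonal, transpose_apply]
  exact and_congr forall_comm (and_congr Iff.rfl forall_comm)

theorem IsNormalizedPosLowerBidiagonal.transpose {n : ℕ} {L : Matrix (Fin n) (Fin n) ℝ}
    (hL : IsNormalizedPosLowerBidiagonal L) : IsNormalizedPosUpperBidiagonal Lᵀ :=
  ⟨isPosLowerBidiagonal_transpose_iff.1 (by simpa using hL.1), hL.2⟩

theorem transpose_ofFn_reverse_prod {n p : ℕ} (A : Fin p → Matrix (Fin n) (Fin n) ℝ) :
    (List.ofFn A).reverse.prodᵀ = (List.ofFn fun i => (A i)ᵀ).prod := by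
  rw [transpose_list_prod, List.map_reverse, List.reverse_reverse, List.map_ofFn]
  rfl

theorem exists_diagonal_mul_normalized_upper_prod {n p : ℕ} (U : Fin p → Matrix (Fin n) (Fin n) ℝ)
    (hU : ∀ j, IsPosUpperBidiagonal (U j)) :
    ∃ (V : Fin p → Matrix (Fin n) (Fin n) ℝ) (d : Fin n → ℝ),
      (∀ j, IsNormalizedPosUpperBidiagonal (V j)) ∧ (∀ i, 0 < d i) ∧
        (List.ofFn U).reverse.prod = diagonal d * (List.ofFn V).reverse.prod := by
  obtain ⟨L, d, hL, hd, hprod⟩ := exists_normalized_lower_prod_mul_diagonal (fun j => (U j)ᵀ)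
    fun j => isPosLowerBidiagonal_transpose_iff.2 (hU j)
  refine ⟨fun j => (L j)ᵀ, d, fun j => (hL j).transpose, hd, transpose_injective ?_⟩
  rw [transpose_ofFn_reverse_prod, hprod, transpose_mul, transpose_ofFn_reverse_prod,
    diagonal_transpose]
  simp

theorem normalized_positive_bidiagonal_factorization_general
    {n p q : ℕ} (T : Matrix (Fin n) (Fin n) ℝ)
    (cL : Fin p → Matrix (Fin n) (Fin n) ℝ) (cU : Fin q → Matrix (Fin n) (Fin n) ℝ)
    (hcL : ∀ i, IsPosLowerBidiagonal (cL i)) (hcU : ∀ j, IsPosUpperBidiagonal (cU j))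
    (hT : T = (List.ofFn cL).prod * (List.ofFn cU).reverse.prod) :
    ∃ (L : Fin p → Matrix (Fin n) (Fin n) ℝ) (U : Fin q → Matrix (Fin n) (Fin n) ℝ)
      (d : Fin n → ℝ),
      (∀ i, IsNormalizedPosLowerBidiagonal (L i)) ∧
      (∀ j, IsNormalizedPosUpperBidiagonal (U j)) ∧
      (∀ i, 0 < d i) ∧
      T = (List.ofFn L).prod * Matrix.diagonal d * (List.ofFn U).reverse.prod := by
  obtain ⟨L, d₁, hL, hd₁, hlower⟩ := exists_normalized_lower_prod_mul_diagonal cL hcL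
  obtain ⟨U, d₂, hU, hd₂, hupper⟩ := exists_diagonal_mul_normalized_upper_prod cU hcU
  refine ⟨L, U, fun i => d₁ i * d₂ i, hL, hU, fun i => mul_pos (hd₁ i) (hd₂ i), ?_⟩
  rw [hT, hlower, hupper, mul_assoc, ← mul_assoc (diagonal d₁), diagonal_mul_diagonal,
    mul_assoc]

/-- Any positive bidiagonal factorization `T = 𝓛₁⋯𝓛ₚ 𝓤_q⋯𝓤₁` can be written in
normalized form `T = L₁⋯Lₚ Δ U_q⋯U₁` with normalized bidiagonal factors and a
positive diagonal matrix `Δ`. -/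
theorem normalized_positive_bidiagonal_factorization
    {n p q : ℕ} (hn : 1 ≤ n) (T : Matrix (Fin n) (Fin n) ℝ)
    (cL : Fin p → Matrix (Fin n) (Fin n) ℝ) (cU : Fin q → Matrix (Fin n) (Fin n) ℝ)
    (hcL : ∀ i, IsPosLowerBidiagonal (cL i)) (hcU : ∀ j, IsPosUpperBidiagonal (cU j))
    (hT : T = (List.ofFn cL).prod * (List.ofFn cU).reverse.prod) :
    ∃ (L : Fin p → Matrix (Fin n) (Fin n) ℝ) (U : Fin q → Matrix (Fin n) (Fin n) ℝ)
      (d : Fin n → ℝ),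
      (∀ i, IsNormalizedPosLowerBidiagonal (L i)) ∧
      (∀ j, IsNormalizedPosUpperBidiagonal (U j)) ∧
      (∀ i, 0 < d i) ∧
      T = (List.ofFn L).prod * Matrix.diagonal d * (List.ofFn U).reverse.prod :=
  normalized_positive_bidiagonal_factorization_general T cL cU hcL hcU hT
end

section
/- Let n ≥ 1 and let T be a real n×n row-stochastic matrix that factors as T = 𝓛₁ * ⋯ * 𝓛_p * 𝓤_q * ⋯ * 𝓤₁, where each 𝓛ᵢ is a positive lower-bidiagonal matrix and each 𝓤ⱼ is a positive upper-bidiagonal matrix. Then there exist positive lower-bidiagonal matrices L̂₁, …, L̂_p and positive upper-bidiagonal matrices Û₁, …, Û_q, each of which is row-stochastic, such that T = L̂₁ * ⋯ * L̂_p * Û_q * ⋯ * Û₁. -/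
/-- A real `n×n` matrix is row-stochastic if all entries are nonnegative and
each row sums to `1`. -/
def IsRowStochastic {n : ℕ} (A : Matrix (Fin n) (Fin n) ℝ) : Prop :=
  (∀ i j, 0 ≤ A i j) ∧ (∀ i, ∑ j, A i j = 1)

/-!
Let `M₁ ⋯ M_m` be the factors of `T`, all nonnegative with positive diagonal, and put
`v_m = 𝟙`, `v_{k-1} = M_k v_k`; these vectors are positive and `v_0 = T 𝟙 = 𝟙`. The diagonal
similarities `N_k = D(v_{k-1})⁻¹ M_k D(v_k)` are row-stochastic, have the sign pattern of `M_k`,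
and their product telescopes to `D(v_0)⁻¹ T D(v_m) = T`.
-/

open Matrix

namespace Matrix

section PosDiagNonneg

variable {ι R : Type*} [Fintype ι] [DecidableEq ι] [Semiring R] [LinearOrder R]
  [IsStrictOrderedRing R]

variable (ι R) in
def posDiagNonneg : Submonoid (Matrix ι ι R) where
  carrier := {M | (∀ i j, 0 ≤ M i j) ∧ ∀ i, 0 < M i i}
  one_mem' := ⟨fun i j => by by_cases h : i = j <;> simp [one_apply, h], fun i => by simp⟩
  mul_mem' := by
    rintro M N ⟨hM, hMd⟩ ⟨hN, hNd⟩
    refine ⟨fun i j => Finset.sum_nonneg fun k _ => mul_nonneg (hM i k) (hN k j), fun i => ?_⟩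
    exact Finset.sum_pos' (fun k _ => mul_nonneg (hM i k) (hN k i))
      ⟨i, Finset.mem_univ i, mul_pos (hMd i) (hNd i)⟩

theorem mulVec_pos_of_mem_posDiagNonneg {M : Matrix ι ι R} (hM : M ∈ posDiagNonneg ι R)
    {w : ι → R} (hw : ∀ i, 0 < w i) (i : ι) : 0 < (M *ᵥ w) i :=
  Finset.sum_pos' (fun j _ => mul_nonneg (hM.1 i j) (hw j).le)
    ⟨i, Finset.mem_univ i, mul_pos (hM.2 i) (hw i)⟩

theorem prod_ofFn_mem_posDiagNonneg {m : ℕ} {f : Fin m → Matrix ι ι R}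
    (hf : ∀ k, f k ∈ posDiagNonneg ι R) : (List.ofFn f).prod ∈ posDiagNonneg ι R :=
  Submonoid.list_prod_mem _ (List.forall_mem_ofFn_iff.mpr hf)

end PosDiagNonneg

variable {ι 𝕜 : Type*} [Fintype ι] [Field 𝕜]

/-- The diagonal similarity `D(M w)⁻¹ M D(w)`. -/
def rescale (M : Matrix ι ι 𝕜) (w : ι → 𝕜) : Matrix ι ι 𝕜 :=
  M ⊙ of fun i j => w j / (M *ᵥ w) i

theorem sum_rescale_apply {M : Matrix ι ι 𝕜} {w : ι → 𝕜} {i : ι} (h : (M *ᵥ w) i ≠ 0) :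
    ∑ j, rescale M w i j = 1 := by
  simp only [rescale, hadamard_apply, of_apply, mul_div_assoc', ← Finset.sum_div]
  exact div_self h

variable [DecidableEq ι]

theorem diagonal_mulVec_mul_rescale {M : Matrix ι ι 𝕜} {w : ι → 𝕜}
    (h : ∀ i, (M *ᵥ w) i ≠ 0) : diagonal (M *ᵥ w) * rescale M w = M * diagonal w := by
  ext i j
  rw [diagonal_mul, mul_diagonal, rescale, hadamard_apply, of_apply]
  field_simp [h i]

def rescaleFactors {m : ℕ} (f : Fin m → Matrix ι ι 𝕜) (w : ι → 𝕜) (k : Fin m) :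
    Matrix ι ι 𝕜 :=
  rescale (f k) (((List.ofFn f).drop (k + 1)).prod *ᵥ w)

theorem rescaleFactors_cons_zero {m : ℕ} (M : Matrix ι ι 𝕜) (f : Fin m → Matrix ι ι 𝕜)
    (w : ι → 𝕜) : rescaleFactors (Fin.cons M f) w 0 = rescale M ((List.ofFn f).prod *ᵥ w) := by
  simp [rescaleFactors, List.ofFn_succ]

theorem rescaleFactors_cons_succ {m : ℕ} (M : Matrix ι ι 𝕜) (f : Fin m → Matrix ι ι 𝕜)
    (w : ι → 𝕜) (k : Fin m) : rescaleFactors (Fin.cons M f) w k.succ = rescaleFactors f w k := by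
  simp [rescaleFactors, List.ofFn_succ]

variable [LinearOrder 𝕜] [IsStrictOrderedRing 𝕜]

theorem rescale_nonneg {M : Matrix ι ι 𝕜} (hM : M ∈ posDiagNonneg ι 𝕜) {w : ι → 𝕜}
    (hw : ∀ i, 0 < w i) (i j : ι) : 0 ≤ rescale M w i j :=
  mul_nonneg (hM.1 i j) (div_nonneg (hw j).le (mulVec_pos_of_mem_posDiagNonneg hM hw i).le)

theorem rescale_pos_of_pos {M : Matrix ι ι 𝕜} (hM : M ∈ posDiagNonneg ι 𝕜) {w : ι → 𝕜}
    (hw : ∀ i, 0 < w i) {i j : ι} (hij : 0 < M i j) : 0 < rescale M w i j :=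
  mul_pos hij (div_pos (hw j) (mulVec_pos_of_mem_posDiagNonneg hM hw i))

theorem exists_rescaleFactors_eq_rescale {m : ℕ} {f : Fin m → Matrix ι ι 𝕜}
    (hf : ∀ k, f k ∈ posDiagNonneg ι 𝕜) {w : ι → 𝕜} (hw : ∀ i, 0 < w i) (k : Fin m) :
    ∃ v : ι → 𝕜, (∀ i, 0 < v i) ∧ rescaleFactors f w k = rescale (f k) v := by
  have hmem : ∀ M ∈ List.ofFn f, M ∈ posDiagNonneg ι 𝕜 := List.forall_mem_ofFn_iff.mpr hf
  exact ⟨_, mulVec_pos_of_mem_posDiagNonneg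
    (Submonoid.list_prod_mem _ fun M hM => hmem M (List.mem_of_mem_drop hM)) hw, rfl⟩

theorem diagonal_mulVec_mul_prod_rescaleFactors {m : ℕ} {f : Fin m → Matrix ι ι 𝕜}
    (hf : ∀ k, f k ∈ posDiagNonneg ι 𝕜) {w : ι → 𝕜} (hw : ∀ i, 0 < w i) :
    diagonal ((List.ofFn f).prod *ᵥ w) * (List.ofFn (rescaleFactors f w)).prod =
      (List.ofFn f).prod * diagonal w := by
  induction f using Fin.consInduction with
  | elim0 => simp
  | cons M g ih =>
    have hM : M ∈ posDiagNonneg ι 𝕜 := by simpa using hf 0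
    have hg : ∀ k, g k ∈ posDiagNonneg ι 𝕜 := fun k => by simpa using hf k.succ
    set v := (List.ofFn g).prod *ᵥ w
    have hv : ∀ i, 0 < v i := mulVec_pos_of_mem_posDiagNonneg (prod_ofFn_mem_posDiagNonneg hg) hw
    calc _ = diagonal (M *ᵥ v) * rescale M v * (List.ofFn (rescaleFactors g w)).prod := by
          simp [List.ofFn_succ, rescaleFactors_cons_zero, rescaleFactors_cons_succ,
            Matrix.mul_assoc, v]
      _ = M * (diagonal v * (List.ofFn (rescaleFactors g w)).prod) := by
          rw [diagonal_mulVec_mul_rescale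
            (fun i => (mulVec_pos_of_mem_posDiagNonneg hM hv i).ne'), Matrix.mul_assoc]
      _ = (List.ofFn (Fin.cons M g)).prod * diagonal w := by
          rw [ih hg]; simp [List.ofFn_succ, Matrix.mul_assoc]

end Matrix

theorem IsPosLowerBidiagonal.mem_posDiagNonneg {n : ℕ} {L : Matrix (Fin n) (Fin n) ℝ}
    (h : IsPosLowerBidiagonal L) : L ∈ posDiagNonneg (Fin n) ℝ := by
  refine ⟨fun i j => ?_, h.2.1⟩
  by_cases h₁ : (i : ℕ) = j
  · exact Fin.ext h₁ ▸ (h.2.1 i).le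
  by_cases h₂ : (i : ℕ) = j + 1
  · exact (h.2.2 i j h₂).le
  · exact (h.1 i j h₁ h₂).ge

theorem IsPosUpperBidiagonal.mem_posDiagNonneg {n : ℕ} {U : Matrix (Fin n) (Fin n) ℝ}
    (h : IsPosUpperBidiagonal U) : U ∈ posDiagNonneg (Fin n) ℝ := by
  refine ⟨fun i j => ?_, h.2.1⟩
  by_cases h₁ : (j : ℕ) = i
  · exact Fin.ext h₁ ▸ (h.2.1 i).le
  by_cases h₂ : (j : ℕ) = i + 1
  · exact (h.2.2 i j h₂).le
  · exact (h.1 i j h₁ h₂).ge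

theorem isRowStochastic_rescale {n : ℕ} {M : Matrix (Fin n) (Fin n) ℝ}
    (hM : M ∈ posDiagNonneg (Fin n) ℝ) {w : Fin n → ℝ} (hw : ∀ i, 0 < w i) :
    IsRowStochastic (rescale M w) :=
  ⟨rescale_nonneg hM hw, fun i => sum_rescale_apply (mulVec_pos_of_mem_posDiagNonneg hM hw i).ne'⟩

theorem IsPosLowerBidiagonal.rescale {n : ℕ} {L : Matrix (Fin n) (Fin n) ℝ}
    (h : IsPosLowerBidiagonal L) {w : Fin n → ℝ} (hw : ∀ i, 0 < w i) :
    IsPosLowerBidiagonal (rescale L w) :=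
  ⟨fun i j h₁ h₂ => by simp [Matrix.rescale, h.1 i j h₁ h₂],
    fun i => rescale_pos_of_pos h.mem_posDiagNonneg hw (h.2.1 i),
    fun i j hij => rescale_pos_of_pos h.mem_posDiagNonneg hw (h.2.2 i j hij)⟩

theorem IsPosUpperBidiagonal.rescale {n : ℕ} {U : Matrix (Fin n) (Fin n) ℝ}
    (h : IsPosUpperBidiagonal U) {w : Fin n → ℝ} (hw : ∀ i, 0 < w i) :
    IsPosUpperBidiagonal (rescale U w) :=
  ⟨fun i j h₁ h₂ => by simp [Matrix.rescale, h.1 i j h₁ h₂],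
    fun i => rescale_pos_of_pos h.mem_posDiagNonneg hw (h.2.1 i),
    fun i j hij => rescale_pos_of_pos h.mem_posDiagNonneg hw (h.2.2 i j hij)⟩

theorem IsPosLowerBidiagonal.rescaleFactors {n m : ℕ} {f : Fin m → Matrix (Fin n) (Fin n) ℝ}
    (hf : ∀ k, IsPosLowerBidiagonal (f k)) {w : Fin n → ℝ} (hw : ∀ i, 0 < w i) (k : Fin m) :
    IsPosLowerBidiagonal (rescaleFactors f w k) ∧ IsRowStochastic (rescaleFactors f w k) := by
  obtain ⟨v, hv, hk⟩ :=
    exists_rescaleFactors_eq_rescale (fun l => (hf l).mem_posDiagNonneg) hw k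
  exact hk ▸ ⟨(hf k).rescale hv, isRowStochastic_rescale (hf k).mem_posDiagNonneg hv⟩

theorem IsPosUpperBidiagonal.rescaleFactors {n m : ℕ} {f : Fin m → Matrix (Fin n) (Fin n) ℝ}
    (hf : ∀ k, IsPosUpperBidiagonal (f k)) {w : Fin n → ℝ} (hw : ∀ i, 0 < w i) (k : Fin m) :
    IsPosUpperBidiagonal (rescaleFactors f w k) ∧ IsRowStochastic (rescaleFactors f w k) := by
  obtain ⟨v, hv, hk⟩ :=
    exists_rescaleFactors_eq_rescale (fun l => (hf l).mem_posDiagNonneg) hw k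
  exact hk ▸ ⟨(hf k).rescale hv, isRowStochastic_rescale (hf k).mem_posDiagNonneg hv⟩

theorem List.reverse_ofFn {α : Type*} {m : ℕ} (f : Fin m → α) :
    (List.ofFn f).reverse = List.ofFn (fun k => f k.rev) := by
  apply List.ext_getElem (by simp)
  intro k h₁ h₂
  simp only [List.getElem_reverse, List.getElem_ofFn, List.length_ofFn]
  congr 1
  ext
  simp [Fin.rev]
  omega

theorem stochastic_bidiagonal_factorization_general
    {n p q : ℕ} (T : Matrix (Fin n) (Fin n) ℝ)
    (hTstoch : IsRowStochastic T)
    (cL : Fin p → Matrix (Fin n) (Fin n) ℝ) (cU : Fin q → Matrix (Fin n) (Fin n) ℝ)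
    (hcL : ∀ i, IsPosLowerBidiagonal (cL i)) (hcU : ∀ j, IsPosUpperBidiagonal (cU j))
    (hT : T = (List.ofFn cL).prod * (List.ofFn cU).reverse.prod) :
    ∃ (L : Fin p → Matrix (Fin n) (Fin n) ℝ) (U : Fin q → Matrix (Fin n) (Fin n) ℝ),
      (∀ i, IsPosLowerBidiagonal (L i) ∧ IsRowStochastic (L i)) ∧
      (∀ j, IsPosUpperBidiagonal (U j) ∧ IsRowStochastic (U j)) ∧
      T = (List.ofFn L).prod * (List.ofFn U).reverse.prod := by
  set g := fun j => cU (Fin.rev j)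
  have hg : ∀ j, IsPosUpperBidiagonal (g j) := fun j => hcU _
  have hone : ∀ i : Fin n, (0 : ℝ) < 1 := fun _ => one_pos
  set w := (List.ofFn g).prod *ᵥ fun _ => 1
  have hw : ∀ i, 0 < w i := mulVec_pos_of_mem_posDiagNonneg
    (prod_ofFn_mem_posDiagNonneg fun j => (hg j).mem_posDiagNonneg) hone
  have hTw : (List.ofFn cL).prod *ᵥ w = fun _ => 1 := by
    funext i
    rw [mulVec_mulVec, ← List.reverse_ofFn, ← hT]
    simpa [mulVec, dotProduct] using hTstoch.2 i
  have hLw : (List.ofFn (rescaleFactors cL w)).prod = (List.ofFn cL).prod * diagonal w := by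
    simpa [hTw] using
      diagonal_mulVec_mul_prod_rescaleFactors (fun k => (hcL k).mem_posDiagNonneg) hw
  have hUw : diagonal w * (List.ofFn (rescaleFactors g fun _ => 1)).prod = (List.ofFn g).prod := by
    simpa using diagonal_mulVec_mul_prod_rescaleFactors (fun k => (hg k).mem_posDiagNonneg) hone
  refine ⟨rescaleFactors cL w, fun j => rescaleFactors g (fun _ => 1) j.rev,
    IsPosLowerBidiagonal.rescaleFactors hcL hw,
    fun j => IsPosUpperBidiagonal.rescaleFactors hg hone j.rev, ?_⟩
  rw [List.reverse_ofFn, hLw, Matrix.mul_assoc]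
  simp only [Fin.rev_rev]
  rw [hUw, hT, List.reverse_ofFn]

/-- A row-stochastic matrix with a positive bidiagonal factorization admits a
positive *stochastic* bidiagonal factorization. -/
theorem stochastic_bidiagonal_factorization
    {n p q : ℕ} (hn : 1 ≤ n) (T : Matrix (Fin n) (Fin n) ℝ)
    (hTstoch : IsRowStochastic T)
    (cL : Fin p → Matrix (Fin n) (Fin n) ℝ) (cU : Fin q → Matrix (Fin n) (Fin n) ℝ)
    (hcL : ∀ i, IsPosLowerBidiagonal (cL i)) (hcU : ∀ j, IsPosUpperBidiagonal (cU j))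
    (hT : T = (List.ofFn cL).prod * (List.ofFn cU).reverse.prod) :
    ∃ (L : Fin p → Matrix (Fin n) (Fin n) ℝ) (U : Fin q → Matrix (Fin n) (Fin n) ℝ),
      (∀ i, IsPosLowerBidiagonal (L i) ∧ IsRowStochastic (L i)) ∧
      (∀ j, IsPosUpperBidiagonal (U j) ∧ IsRowStochastic (U j)) ∧
      T = (List.ofFn L).prod * (List.ofFn U).reverse.prod :=
  stochastic_bidiagonal_factorization_general T hTstoch cL cU hcL hcU hT
end

section
/- Let n ≥ 1 and let A be a real n×n matrix that factors as A = 𝓛₁ * ⋯ * 𝓛_p * 𝓤_q * ⋯ * 𝓤₁ with each 𝓛ᵢ positive lower-bidiagonal and each 𝓤ⱼ positive upper-bidiagonal. Let λ > 0 and let u : Fin n → ℝ have all entries positive with A *ᵥ u = λ • u, and set := λ⁻¹ • ((Matrix.diagonal u)⁻¹ * A * Matrix.diagonal u). Then admits a factorization = L̂₁ * ⋯ * L̂_p * Û_q * ⋯ * Û₁ where each L̂ᵢ is a row-stochastic positive lower-bidiagonal matrix and each Ûⱼ is a row-stochastic positive upper-bidiagonal matrix. -/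
open Matrix

/-! ### Auxiliary material -/

/-- Diagonal conjugation `D(v)⁻¹ * M * D(w)` (with pointwise inverses). -/
noncomputable def bdConj {n : ℕ} (v w : Fin n → ℝ) (M : Matrix (Fin n) (Fin n) ℝ) :
    Matrix (Fin n) (Fin n) ℝ :=
  Matrix.diagonal (fun i => (v i)⁻¹) * M * Matrix.diagonal w

lemma bdConj_apply {n : ℕ} (v w : Fin n → ℝ) (M : Matrix (Fin n) (Fin n) ℝ)
    (i j : Fin n) : bdConj v w M i j = (v i)⁻¹ * M i j * w j := by
  simp [bdConj, Matrix.mul_diagonal, Matrix.diagonal_mul]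

lemma bdConj_mul {n : ℕ} (v w x : Fin n → ℝ) (hw : ∀ i, w i ≠ 0)
    (M N : Matrix (Fin n) (Fin n) ℝ) :
    bdConj v w M * bdConj w x N = bdConj v x (M * N) := by
  have h1 : Matrix.diagonal w * Matrix.diagonal (fun i => (w i)⁻¹)
      = (1 : Matrix (Fin n) (Fin n) ℝ) := by
    rw [Matrix.diagonal_mul_diagonal]
    have : (fun i => w i * (w i)⁻¹) = fun _ : Fin n => (1 : ℝ) :=
      funext fun i => mul_inv_cancel₀ (hw i)
    rw [this, Matrix.diagonal_one]
  unfold bdConj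
  simp only [mul_assoc]
  rw [← mul_assoc (Matrix.diagonal w) (Matrix.diagonal fun i => (w i)⁻¹), h1, one_mul]

lemma bdConj_one {n : ℕ} (v : Fin n → ℝ) (hv : ∀ i, v i ≠ 0) :
    bdConj v v (1 : Matrix (Fin n) (Fin n) ℝ) = 1 := by
  unfold bdConj
  rw [mul_one, Matrix.diagonal_mul_diagonal]
  have : (fun i => (v i)⁻¹ * v i) = fun _ : Fin n => (1 : ℝ) :=
    funext fun i => inv_mul_cancel₀ (hv i)
  rw [this, Matrix.diagonal_one]

lemma lower_nonneg {n : ℕ} {M : Matrix (Fin n) (Fin n) ℝ}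
    (hM : IsPosLowerBidiagonal M) : ∀ i j, 0 ≤ M i j := by
  intro i j
  rcases eq_or_ne (i : ℕ) (j : ℕ) with h | h
  · have : i = j := Fin.ext h
    subst this; exact (hM.2.1 i).le
  rcases eq_or_ne (i : ℕ) ((j : ℕ) + 1) with h2 | h2
  · exact (hM.2.2 i j h2).le
  · rw [hM.1 i j h h2]

lemma upper_nonneg {n : ℕ} {M : Matrix (Fin n) (Fin n) ℝ}
    (hM : IsPosUpperBidiagonal M) : ∀ i j, 0 ≤ M i j := by
  intro i j
  rcases eq_or_ne (j : ℕ) (i : ℕ) with h | h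
  · have : i = j := Fin.ext h.symm
    subst this; exact (hM.2.1 i).le
  rcases eq_or_ne (j : ℕ) ((i : ℕ) + 1) with h2 | h2
  · exact (hM.2.2 i j h2).le
  · rw [hM.1 i j h h2]

lemma bdMulVec_pos {n : ℕ} {M : Matrix (Fin n) (Fin n) ℝ}
    (hnn : ∀ i j, 0 ≤ M i j) (hd : ∀ i, 0 < M i i) {v : Fin n → ℝ}
    (hv : ∀ i, 0 < v i) (i : Fin n) : 0 < (M *ᵥ v) i := by
  have hle : M i i * v i ≤ ∑ j, M i j * v j :=
    Finset.single_le_sum (fun j _ => mul_nonneg (hnn i j) (hv j).le)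
      (Finset.mem_univ i)
  have h0 : 0 < M i i * v i := mul_pos (hd i) (hv i)
  have hval : (M *ᵥ v) i = ∑ j, M i j * v j := rfl
  rw [hval]; exact lt_of_lt_of_le h0 hle

lemma bdConj_lower {n : ℕ} {v w : Fin n → ℝ} (hv : ∀ i, 0 < v i)
    (hw : ∀ i, 0 < w i) {M : Matrix (Fin n) (Fin n) ℝ}
    (hM : IsPosLowerBidiagonal M) : IsPosLowerBidiagonal (bdConj v w M) := by
  refine ⟨fun i j h1 h2 => ?_, fun i => ?_, fun i j h => ?_⟩
  · rw [bdConj_apply, hM.1 i j h1 h2, mul_zero, zero_mul]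
  · rw [bdConj_apply]
    exact mul_pos (mul_pos (inv_pos.2 (hv i)) (hM.2.1 i)) (hw i)
  · rw [bdConj_apply]
    exact mul_pos (mul_pos (inv_pos.2 (hv i)) (hM.2.2 i j h)) (hw j)

lemma bdConj_upper {n : ℕ} {v w : Fin n → ℝ} (hv : ∀ i, 0 < v i)
    (hw : ∀ i, 0 < w i) {M : Matrix (Fin n) (Fin n) ℝ}
    (hM : IsPosUpperBidiagonal M) : IsPosUpperBidiagonal (bdConj v w M) := by
  refine ⟨fun i j h1 h2 => ?_, fun i => ?_, fun i j h => ?_⟩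
  · rw [bdConj_apply, hM.1 i j h1 h2, mul_zero, zero_mul]
  · rw [bdConj_apply]
    exact mul_pos (mul_pos (inv_pos.2 (hv i)) (hM.2.1 i)) (hw i)
  · rw [bdConj_apply]
    exact mul_pos (mul_pos (inv_pos.2 (hv i)) (hM.2.2 i j h)) (hw j)

lemma bdConj_stochastic {n : ℕ} {v w : Fin n → ℝ} (hv : ∀ i, 0 < v i)
    (hw : ∀ i, 0 < w i) {M : Matrix (Fin n) (Fin n) ℝ}
    (hnn : ∀ i j, 0 ≤ M i j) (hMw : M *ᵥ w = v) :
    IsRowStochastic (bdConj v w M) := by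
  constructor
  · intro i j
    rw [bdConj_apply]
    exact mul_nonneg (mul_nonneg (inv_nonneg.2 (hv i).le) (hnn i j)) (hw j).le
  · intro i
    have hsum : ∑ j, bdConj v w M i j = (v i)⁻¹ * ∑ j, M i j * w j := by
      rw [Finset.mul_sum]
      exact Finset.sum_congr rfl fun j _ => by rw [bdConj_apply, mul_assoc]
    have hMv : ∑ j, M i j * w j = v i := by
      have : (M *ᵥ w) i = v i := by rw [hMw]
      simpa [Matrix.mulVec, dotProduct] using this
    rw [hsum, hMv, inv_mul_cancel₀ (hv i).ne']

lemma bdProd_conj {n : ℕ} : ∀ {m : ℕ} (M : Fin m → Matrix (Fin n) (Fin n) ℝ)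
    (v : ℕ → Fin n → ℝ), (∀ k i, v k i ≠ 0) →
    (List.ofFn fun k : Fin m => bdConj (v k) (v (k + 1)) (M k)).prod
      = bdConj (v 0) (v m) (List.ofFn M).prod := by
  intro m
  induction m with
  | zero =>
      intro M v hv
      simp only [List.ofFn_zero, List.prod_nil]
      exact (bdConj_one (v 0) (hv 0)).symm
  | succ m ih =>
      intro M v hv
      rw [List.ofFn_succ, List.ofFn_succ (f := M), List.prod_cons, List.prod_cons]
      have htail : (List.ofFn fun k : Fin m =>
          bdConj (v ((Fin.succ k : Fin (m + 1)) : ℕ))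
            (v (((Fin.succ k : Fin (m + 1)) : ℕ) + 1)) (M k.succ)).prod
          = bdConj (v 1) (v (m + 1)) (List.ofFn fun k : Fin m => M k.succ).prod := by
        have := ih (fun k => M k.succ) (fun k => v (k + 1)) (fun k i => hv (k + 1) i)
        simpa [Fin.val_succ] using this
      rw [htail]
      have h0 : ((0 : Fin (m + 1)) : ℕ) = 0 := rfl
      rw [h0, bdConj_mul (v 0) (v 1) (v (m + 1)) (hv 1)]

lemma bdOfFn_reverse {α : Type*} {m : ℕ} (f : Fin m → α) :
    (List.ofFn f).reverse = List.ofFn (fun i => f i.rev) := by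
  apply List.ext_getElem
  · simp
  · intro i h1 h2
    simp only [List.getElem_reverse, List.getElem_ofFn, List.length_reverse,
      List.length_ofFn] at *
    congr 1
    apply Fin.ext
    simp only [Fin.val_rev]
    omega

lemma bdTail_step {n m : ℕ} (M : Fin m → Matrix (Fin n) (Fin n) ℝ)
    (x : Fin n → ℝ) (k : ℕ) (hk : k < m) :
    ((List.ofFn M).drop k).prod *ᵥ x
      = M ⟨k, hk⟩ *ᵥ (((List.ofFn M).drop (k + 1)).prod *ᵥ x) := by
  rw [List.drop_eq_getElem_cons (by simpa using hk), List.prod_cons,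
    Matrix.mulVec_mulVec]
  congr 2
  simp

lemma bdTail_pos {n m : ℕ} (M : Fin m → Matrix (Fin n) (Fin n) ℝ)
    (hnn : ∀ k i j, 0 ≤ M k i j) (hd : ∀ k i, 0 < M k i i)
    (x : Fin n → ℝ) (hx : ∀ i, 0 < x i) :
    ∀ k i, 0 < (((List.ofFn M).drop k).prod *ᵥ x) i := by
  have key : ∀ d k, m - k ≤ d → ∀ i, 0 < (((List.ofFn M).drop k).prod *ᵥ x) i := by
    intro d
    induction d with
    | zero =>
        intro k hk i
        have hnil : (List.ofFn M).drop k = [] :=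
          List.drop_eq_nil_of_le (by simp; omega)
        rw [hnil, List.prod_nil, Matrix.one_mulVec]
        exact hx i
    | succ d ih =>
        intro k hk i
        by_cases hkm : k < m
        · rw [bdTail_step M x k hkm]
          exact bdMulVec_pos (hnn _) (hd _) (fun j => ih (k + 1) (by omega) j) i
        · have hnil : (List.ofFn M).drop k = [] :=
            List.drop_eq_nil_of_le (by simp; omega)
          rw [hnil, List.prod_nil, Matrix.one_mulVec]
          exact hx i
  exact fun k i => key (m - k) k le_rfl i

/-- If `A` has a positive bidiagonal factorization and a positive right
eigenvector `u` with positive eigenvalue `lam`, then the Perron renormalization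
`Â := lam⁻¹ • ((diagonal u)⁻¹ * A * diagonal u)` admits a stochastic positive
bidiagonal factorization. -/
theorem renormalized_matrix_stochastic_bidiagonal_factorization
    {n p q : ℕ} (hn : 1 ≤ n) (A : Matrix (Fin n) (Fin n) ℝ)
    (cL : Fin p → Matrix (Fin n) (Fin n) ℝ) (cU : Fin q → Matrix (Fin n) (Fin n) ℝ)
    (hcL : ∀ i, IsPosLowerBidiagonal (cL i)) (hcU : ∀ j, IsPosUpperBidiagonal (cU j))
    (hA : A = (List.ofFn cL).prod * (List.ofFn cU).reverse.prod)
    (lam : ℝ) (hlam : 0 < lam)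
    (u : Fin n → ℝ) (hu : ∀ i, 0 < u i) (heig : A *ᵥ u = lam • u) :
    ∃ (L : Fin p → Matrix (Fin n) (Fin n) ℝ) (U : Fin q → Matrix (Fin n) (Fin n) ℝ),
      (∀ i, IsPosLowerBidiagonal (L i) ∧ IsRowStochastic (L i)) ∧
      (∀ j, IsPosUpperBidiagonal (U j) ∧ IsRowStochastic (U j)) ∧
      lam⁻¹ • ((Matrix.diagonal u)⁻¹ * A * Matrix.diagonal u)
        = (List.ofFn L).prod * (List.ofFn U).reverse.prod := by
  classical
  set cU' : Fin q → Matrix (Fin n) (Fin n) ℝ := fun k => cU k.rev with hcU'def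
  have hrevU : (List.ofFn cU).reverse = List.ofFn cU' := bdOfFn_reverse cU
  -- tail vectors
  set vU : ℕ → Fin n → ℝ := fun k => ((List.ofFn cU').drop k).prod *ᵥ u with hvUdef
  set vL : ℕ → Fin n → ℝ := fun k => ((List.ofFn cL).drop k).prod *ᵥ vU 0 with hvLdef
  have hLnn : ∀ k (i j : Fin n), 0 ≤ cL k i j := fun k => lower_nonneg (hcL k)
  have hUnn : ∀ k (i j : Fin n), 0 ≤ cU' k i j := fun k => upper_nonneg (hcU k.rev)
  have hvU_pos : ∀ k i, 0 < vU k i :=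
    bdTail_pos cU' hUnn (fun k i => (hcU k.rev).2.1 i) u hu
  have hvL_pos : ∀ k i, 0 < vL k i :=
    bdTail_pos cL hLnn (fun k i => (hcL k).2.1 i) (vU 0) (hvU_pos 0)
  have hvUq : vU q = u := by
    have hnil : (List.ofFn cU').drop q = [] := List.drop_eq_nil_of_le (by simp)
    simp [hvUdef, hnil, Matrix.one_mulVec]
  have hvLp : vL p = vU 0 := by
    have hnil : (List.ofFn cL).drop p = [] := List.drop_eq_nil_of_le (by simp)
    simp [hvLdef, hnil, Matrix.one_mulVec]
  have hvL0 : vL 0 = lam • u := by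
    have : vL 0 = A *ᵥ u := by
      simp only [hvLdef, hvUdef, List.drop_zero, Matrix.mulVec_mulVec]
      rw [hA, hrevU]
    rw [this, heig]
  have hstepL : ∀ k : Fin p, cL k *ᵥ vL ((k : ℕ) + 1) = vL (k : ℕ) := by
    intro k
    have := bdTail_step cL (vU 0) (k : ℕ) k.isLt
    simpa [hvLdef, Fin.eta] using this.symm
  have hstepU : ∀ k : Fin q, cU' k *ᵥ vU ((k : ℕ) + 1) = vU (k : ℕ) := by
    intro k
    have := bdTail_step cU' u (k : ℕ) k.isLt
    simpa [hvUdef, Fin.eta] using this.symm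
  refine ⟨fun i => bdConj (vL i) (vL ((i : ℕ) + 1)) (cL i),
    fun j => bdConj (vU ((j.rev : ℕ))) (vU ((j.rev : ℕ) + 1)) (cU' j.rev), ?_, ?_, ?_⟩
  · intro i
    refine ⟨bdConj_lower (hvL_pos _) (hvL_pos _) (hcL i), ?_⟩
    exact bdConj_stochastic (hvL_pos _) (hvL_pos _) (hLnn i) (hstepL i)
  · intro j
    have hub : IsPosUpperBidiagonal (cU' j.rev) := by
      rw [hcU'def]; exact hcU j.rev.rev
    refine ⟨bdConj_upper (hvU_pos _) (hvU_pos _) hub, ?_⟩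
    exact bdConj_stochastic (hvU_pos _) (hvU_pos _) (hUnn j.rev) (hstepU j.rev)
  · have hvLne : ∀ k i, vL k i ≠ 0 := fun k i => (hvL_pos k i).ne'
    have hvUne : ∀ k i, vU k i ≠ 0 := fun k i => (hvU_pos k i).ne'
    have hLprod : (List.ofFn fun i : Fin p =>
        bdConj (vL i) (vL ((i : ℕ) + 1)) (cL i)).prod
        = bdConj (vL 0) (vL p) (List.ofFn cL).prod :=
      bdProd_conj cL vL hvLne
    have hUrev : (List.ofFn fun j : Fin q =>
        bdConj (vU ((j.rev : ℕ))) (vU ((j.rev : ℕ) + 1)) (cU' j.rev)).reverse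
        = List.ofFn fun k : Fin q => bdConj (vU k) (vU ((k : ℕ) + 1)) (cU' k) := by
      rw [bdOfFn_reverse]
      refine congrArg _ (funext fun k => ?_)
      rw [Fin.rev_rev]
    have hUprod : (List.ofFn fun k : Fin q =>
        bdConj (vU k) (vU ((k : ℕ) + 1)) (cU' k)).prod
        = bdConj (vU 0) (vU q) (List.ofFn cU').prod :=
      bdProd_conj cU' vU hvUne
    rw [hLprod, hUrev, hUprod, hvLp,
      bdConj_mul (vL 0) (vU 0) (vU q) (hvUne 0), hvUq, hvL0,
      ← hrevU, ← hA]
    -- now show  lam⁻¹ • ((diagonal u)⁻¹ * A * diagonal u) = bdConj (lam • u) u A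
    have hdiag : (Matrix.diagonal u)⁻¹ = Matrix.diagonal (fun i => (u i)⁻¹) := by
      apply Matrix.inv_eq_right_inv
      rw [Matrix.diagonal_mul_diagonal]
      have : (fun i => u i * (u i)⁻¹) = fun _ : Fin n => (1 : ℝ) :=
        funext fun i => mul_inv_cancel₀ (hu i).ne'
      rw [this, Matrix.diagonal_one]
    have hfun : (fun i => ((lam • u) i)⁻¹)
        = lam⁻¹ • (fun i => (u i)⁻¹) := by
      funext i
      simp [mul_inv, mul_comm]
    unfold bdConj
    rw [hfun, Matrix.diagonal_smul, hdiag, Matrix.smul_mul, Matrix.smul_mul]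
end

section
/- Let n ≥ 1 and let T, U, W be real n×n matrices and d : Fin n → ℝ such that W * U = 1 and T = U * Matrix.diagonal d * W. Write u₀ j := U j 0, assume u₀ j > 0 for all j, d 0 > 0, and |d j| ≤ d 0 for all j, and define T̂ := (d 0)⁻¹ • ((Matrix.diagonal u₀)⁻¹ * T * Matrix.diagonal u₀). Then for every real s with |s| < 1 and all indices m', m, the series ∑_{k=0}^∞ s^k (T̂^k) m' m is summable and ∑'_{k} s^k (T̂^k) m' m = (U m 0 / U m' 0) * ∑ j, (U m' j * W j m) / (1 - s * (d j / d 0)). -/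
open Matrix

/-- Spectral representation of the transition probability generating functions
`P_{m'm}(s) = ∑_k s^k (T̂^k)_{m'm}` for `|s| < 1`. -/
theorem generating_function_spectral_representation
    {n : ℕ} (T U W : Matrix (Fin (n + 1)) (Fin (n + 1)) ℝ) (d : Fin (n + 1) → ℝ)
    (hWU : W * U = 1) (hT : T = U * Matrix.diagonal d * W)
    (hu : ∀ j, 0 < U j 0) (hd : 0 < d 0) (hdle : ∀ j, |d j| ≤ d 0)
    (s : ℝ) (hs : |s| < 1) (m' m : Fin (n + 1)) :
    Summable (fun k : ℕ =>
      s ^ k * ((((d 0)⁻¹ • ((Matrix.diagonal (fun j => U j 0))⁻¹ * T *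
        Matrix.diagonal (fun j => U j 0))) ^ k) m' m)) ∧
    ∑' k : ℕ,
      s ^ k * ((((d 0)⁻¹ • ((Matrix.diagonal (fun j => U j 0))⁻¹ * T *
        Matrix.diagonal (fun j => U j 0))) ^ k) m' m)
      = (U m 0 / U m' 0) * ∑ j, (U m' j * W j m) / (1 - s * (d j / d 0)) := by
  have hUW : U * W = 1 := mul_eq_one_comm.mp hWU
  set u₀ : Fin (n + 1) → ℝ := fun j => U j 0 with hu₀
  have hu0 : ∀ j, u₀ j ≠ 0 := fun j => (hu j).ne'
  set D : Matrix (Fin (n + 1)) (Fin (n + 1)) ℝ := Matrix.diagonal u₀ with hD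
  have hDinv : D⁻¹ = Matrix.diagonal (fun j => (u₀ j)⁻¹) := by
    refine Matrix.inv_eq_left_inv ?_
    rw [hD, Matrix.diagonal_mul_diagonal]
    rw [show (fun j => (u₀ j)⁻¹ * u₀ j) = fun _ => (1:ℝ) from
      funext fun j => inv_mul_cancel₀ (hu0 j), Matrix.diagonal_one]
  have hDD : D⁻¹ * D = 1 := by
    rw [hDinv, hD, Matrix.diagonal_mul_diagonal]
    rw [show (fun j => (u₀ j)⁻¹ * u₀ j) = fun _ => (1:ℝ) from
      funext fun j => inv_mul_cancel₀ (hu0 j), Matrix.diagonal_one]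
  -- powers of T
  have hTk : ∀ k : ℕ, T ^ k = U * Matrix.diagonal (fun j => d j ^ k) * W := by
    intro k
    induction k with
    | zero => simp [hUW]
    | succ k ih =>
      rw [pow_succ, ih, hT]
      rw [show U * Matrix.diagonal (fun j => d j ^ k) * W * (U * Matrix.diagonal d * W)
          = U * Matrix.diagonal (fun j => d j ^ k) * (W * U) * Matrix.diagonal d * W by
        simp only [Matrix.mul_assoc]]
      rw [hWU]
      simp [Matrix.mul_assoc, Matrix.diagonal_mul_diagonal, pow_succ]
  have hconj : ∀ k : ℕ, (D⁻¹ * T * D) ^ k = D⁻¹ * T ^ k * D := by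
    intro k
    induction k with
    | zero => rw [pow_zero, pow_zero, Matrix.mul_one, hDD]
    | succ k ih =>
      rw [pow_succ, ih, pow_succ]
      rw [show D⁻¹ * T ^ k * D * (D⁻¹ * T * D) = D⁻¹ * T ^ k * (D * D⁻¹) * T * D by
        simp only [Matrix.mul_assoc]]
      have hDD' : D * D⁻¹ = 1 := by
        rw [hDinv, hD, Matrix.diagonal_mul_diagonal]
        rw [show (fun j => u₀ j * (u₀ j)⁻¹) = fun _ => (1:ℝ) from
          funext fun j => mul_inv_cancel₀ (hu0 j), Matrix.diagonal_one]
      rw [hDD', Matrix.mul_one]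
      simp only [Matrix.mul_assoc]
  -- entry formula
  have key : ∀ k : ℕ, (((d 0)⁻¹ • (D⁻¹ * T * D)) ^ k) m' m
      = ∑ j, (U m' j * W j m) * (u₀ m / u₀ m') * (d j / d 0) ^ k := by
    intro k
    rw [smul_pow, hconj, hTk, Matrix.smul_apply]
    have : (D⁻¹ * (U * Matrix.diagonal (fun j => d j ^ k) * W) * D) m' m
        = (u₀ m')⁻¹ * ((U * Matrix.diagonal (fun j => d j ^ k) * W) m' m) * u₀ m := by
      rw [hD, Matrix.mul_diagonal, hDinv, Matrix.diagonal_mul]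
    rw [this]
    have hUdW : (U * Matrix.diagonal (fun j => d j ^ k) * W) m' m
        = ∑ j, U m' j * d j ^ k * W j m := by
      rw [Matrix.mul_apply]
      congr 1
      funext j
      rw [Matrix.mul_diagonal]
    rw [hUdW, smul_eq_mul, Finset.mul_sum, Finset.sum_mul, Finset.mul_sum]
    congr 1
    funext j
    have hd0 : (d 0 : ℝ) ≠ 0 := hd.ne'
    field_simp
    ring
  -- the summands
  have hterm : ∀ k : ℕ, s ^ k * (((d 0)⁻¹ • (D⁻¹ * T * D)) ^ k) m' m
      = ∑ j, (U m' j * W j m) * (u₀ m / u₀ m') * (s * (d j / d 0)) ^ k := by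
    intro k
    rw [key, Finset.mul_sum]
    congr 1
    funext j
    rw [mul_pow]
    ring
  have hr : ∀ j, ‖s * (d j / d 0)‖ < 1 := by
    intro j
    rw [Real.norm_eq_abs, abs_mul, abs_div, abs_of_pos hd]
    calc |s| * (|d j| / d 0) ≤ |s| * 1 := by
          apply mul_le_mul_of_nonneg_left _ (abs_nonneg s)
          exact (div_le_one hd).mpr (hdle j)
      _ < 1 := by rwa [mul_one]
  have hsumm : ∀ j, Summable (fun k : ℕ =>
      (U m' j * W j m) * (u₀ m / u₀ m') * (s * (d j / d 0)) ^ k) :=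
    fun j => (summable_geometric_of_norm_lt_one (hr j)).mul_left _
  have hS : Summable (fun k : ℕ => s ^ k * (((d 0)⁻¹ • (D⁻¹ * T * D)) ^ k) m' m) := by
    rw [show (fun k : ℕ => s ^ k * (((d 0)⁻¹ • (D⁻¹ * T * D)) ^ k) m' m)
        = fun k : ℕ => ∑ j, (U m' j * W j m) * (u₀ m / u₀ m') * (s * (d j / d 0)) ^ k from
      funext hterm]
    exact summable_sum (fun j _ => hsumm j)
  refine ⟨hS, ?_⟩
  rw [tsum_congr hterm, Summable.tsum_finsetSum (fun j _ => hsumm j)]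
  rw [Finset.mul_sum]
  congr 1
  funext j
  rw [tsum_mul_left, tsum_geometric_of_norm_lt_one (hr j)]
  simp only [hu₀, div_eq_mul_inv]
  ring
end

section
/- Let n ≥ 1 and let T, U, W be real n×n matrices and d : Fin n → ℝ such that W * U = 1 and T = U * Matrix.diagonal d * W. Assume: U j 0 > 0 and W 0 j > 0 for all j; d j > 0 for all j; and d j < d 0 for all j ≠ 0. Define T̂ := (d 0)⁻¹ • ((Matrix.diagonal (fun j => U j 0))⁻¹ * T * Matrix.diagonal (fun j => U j 0)). Then for every index m, the transition probability generating function diverges at 1 from the left: Tendsto (fun s => ∑'_{k}, s^k * (T̂^k) m m) (𝓝[<] 1) atTop. Consequently every state of the Markov chain with transition matrix T̂ is recurrent. -/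
open Matrix Filter Topology

/-- For the renormalized chain `T̂`, the diagonal generating function
`P_{mm}(s) = ∑_k s^k (T̂^k)_{mm}` diverges to `+∞` as `s → 1⁻`;
hence every state is recurrent. -/
theorem recurrence_of_finite_chain
    {n : ℕ} (T U W : Matrix (Fin (n + 1)) (Fin (n + 1)) ℝ) (d : Fin (n + 1) → ℝ)
    (hWU : W * U = 1) (hT : T = U * Matrix.diagonal d * W)
    (hu : ∀ j, 0 < U j 0) (hw : ∀ j, 0 < W 0 j)
    (hd : ∀ j, 0 < d j) (hdlt : ∀ j, j ≠ 0 → d j < d 0)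
    (m : Fin (n + 1)) :
    Tendsto (fun s : ℝ =>
        ∑' k : ℕ,
          s ^ k * ((((d 0)⁻¹ • ((Matrix.diagonal (fun j => U j 0))⁻¹ * T *
            Matrix.diagonal (fun j => U j 0))) ^ k) m m))
      (𝓝[<] (1 : ℝ)) atTop := by
  have hUW : U * W = 1 := mul_eq_one_comm.mp hWU
  set D : Matrix (Fin (n+1)) (Fin (n+1)) ℝ := Matrix.diagonal d with hD
  set Du : Matrix (Fin (n+1)) (Fin (n+1)) ℝ := Matrix.diagonal (fun j => U j 0) with hDu
  have hd0 : (0:ℝ) < d 0 := hd 0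
  -- r and a
  set r : Fin (n+1) → ℝ := fun j => d j / d 0 with hr
  set a : Fin (n+1) → ℝ := fun j => U m j * W j m with ha
  have hr0 : r 0 = 1 := div_self hd0.ne'
  have hrpos : ∀ j, 0 < r j := fun j => div_pos (hd j) hd0
  have hrle : ∀ j, r j ≤ 1 := by
    intro j
    by_cases hj : j = 0
    · simp [hj, hr0]
    · exact le_of_lt ((div_lt_one hd0).mpr (hdlt j hj))
  have hrlt : ∀ j, j ≠ 0 → r j < 1 := fun j hj => (div_lt_one hd0).mpr (hdlt j hj)
  -- Du invertible
  have hDuinv : Du⁻¹ = Matrix.diagonal (fun j => (U j 0)⁻¹) :=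
    Matrix.inv_eq_right_inv (by
      rw [hDu, Matrix.diagonal_mul_diagonal,
        show (fun j => U j 0 * (U j 0)⁻¹) = fun _ : Fin (n+1) => (1:ℝ) from
          funext fun j => mul_inv_cancel₀ (hu j).ne', Matrix.diagonal_one])
  have hDuDu : Du⁻¹ * Du = 1 := by
    rw [hDuinv, hDu, Matrix.diagonal_mul_diagonal,
      show (fun j => (U j 0)⁻¹ * U j 0) = fun _ : Fin (n+1) => (1:ℝ) from
        funext fun j => inv_mul_cancel₀ (hu j).ne', Matrix.diagonal_one]
  have hDuDu' : Du * Du⁻¹ = 1 := by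
    rw [hDuinv, hDu, Matrix.diagonal_mul_diagonal,
      show (fun j => U j 0 * (U j 0)⁻¹) = fun _ : Fin (n+1) => (1:ℝ) from
        funext fun j => mul_inv_cancel₀ (hu j).ne', Matrix.diagonal_one]
  -- T^k
  have hTk : ∀ k : ℕ, T ^ k = U * D ^ k * W := by
    intro k
    induction k with
    | zero => simpa using hUW.symm
    | succ k ih =>
      rw [pow_succ, ih, hT, pow_succ]
      calc U * D ^ k * W * (U * D * W)
          = U * D ^ k * (W * U) * (D * W) := by simp only [Matrix.mul_assoc]
        _ = U * D ^ k * (D * W) := by rw [hWU, Matrix.mul_one]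
        _ = U * (D ^ k * D) * W := by simp only [Matrix.mul_assoc]
  -- conjugation
  have hConj : ∀ k : ℕ, (Du⁻¹ * T * Du) ^ k = Du⁻¹ * T ^ k * Du := by
    intro k
    induction k with
    | zero => simpa using hDuDu.symm
    | succ k ih =>
      rw [pow_succ, ih, pow_succ]
      calc Du⁻¹ * T ^ k * Du * (Du⁻¹ * T * Du)
          = Du⁻¹ * T ^ k * (Du * Du⁻¹) * (T * Du) := by simp only [Matrix.mul_assoc]
        _ = Du⁻¹ * T ^ k * (T * Du) := by rw [hDuDu', Matrix.mul_one]
        _ = Du⁻¹ * (T ^ k * T) * Du := by simp only [Matrix.mul_assoc]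
  -- entry formula
  have hf : ∀ k : ℕ, (((d 0)⁻¹ • (Du⁻¹ * T * Du)) ^ k) m m
      = ∑ j, r j ^ k * a j := by
    intro k
    rw [smul_pow, hConj k, hTk k, Matrix.smul_apply]
    have h1 : (Du⁻¹ * (U * D ^ k * W) * Du) m m
        = (U m 0)⁻¹ * (U * D ^ k * W) m m * U m 0 := by
      rw [hDu, Matrix.mul_diagonal, hDuinv, Matrix.diagonal_mul]
    have h2 : (U * D ^ k * W) m m = ∑ j, U m j * d j ^ k * W j m := by
      rw [hD, Matrix.diagonal_pow, Matrix.mul_apply]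
      congr 1
      ext j
      rw [Matrix.mul_diagonal, Pi.pow_apply]
    rw [h1, h2, smul_eq_mul, Finset.mul_sum, Finset.sum_mul, Finset.mul_sum]
    refine Finset.sum_congr rfl fun j _ => ?_
    rw [hr, ha, div_pow, inv_pow]
    have h1 : U m 0 ≠ 0 := (hu m).ne'
    have h2 : d 0 ^ k ≠ 0 := pow_ne_zero _ hd0.ne'
    field_simp
  -- tsum identity on Ioo 0 1
  have key : ∀ s ∈ Set.Ioo (0:ℝ) 1,
      ∑' k : ℕ, s ^ k * ((((d 0)⁻¹ • (Du⁻¹ * T * Du)) ^ k) m m)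
        = ∑ j, (1 - s * r j)⁻¹ * a j := by
    intro s hs
    have hsr : ∀ j, 0 ≤ s * r j := fun j => le_of_lt (mul_pos hs.1 (hrpos j))
    have hsr1 : ∀ j, s * r j < 1 := by
      intro j
      have h1 : s * r j ≤ s := by
        calc s * r j ≤ s * 1 := mul_le_mul_of_nonneg_left (hrle j) hs.1.le
          _ = s := mul_one s
      exact h1.trans_lt hs.2
    have hsum : ∀ j, Summable (fun k : ℕ => (s * r j) ^ k * a j) :=
      fun j => (summable_geometric_of_lt_one (hsr j) (hsr1 j)).mul_right _
    calc ∑' k : ℕ, s ^ k * ((((d 0)⁻¹ • (Du⁻¹ * T * Du)) ^ k) m m)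
        = ∑' k : ℕ, ∑ j, (s * r j) ^ k * a j := by
          congr 1
          funext k
          rw [hf k, Finset.mul_sum]
          refine Finset.sum_congr rfl fun j _ => ?_
          rw [mul_pow]
          ring
      _ = ∑ j, ∑' k : ℕ, (s * r j) ^ k * a j := Summable.tsum_finsetSum fun j _ => hsum j
      _ = ∑ j, (1 - s * r j)⁻¹ * a j := by
          refine Finset.sum_congr rfl fun j _ => ?_
          rw [tsum_mul_right, tsum_geometric_of_lt_one (hsr j) (hsr1 j)]
  have ha0 : 0 < a 0 := mul_pos (hu m) (hw m)
  have h1 : Tendsto (fun s : ℝ => (1 - s * r 0)⁻¹ * a 0) (𝓝[<] (1:ℝ)) atTop := by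
    have hinv : Tendsto (fun s : ℝ => (1 - s)⁻¹) (𝓝[<] (1:ℝ)) atTop := by
      apply tendsto_inv_nhdsGT_zero.comp
      have hc : Tendsto (fun s : ℝ => 1 - s) (𝓝 (1:ℝ)) (𝓝 0) := by
        have hcont : Continuous (fun s : ℝ => 1 - s) := by continuity
        simpa using hcont.tendsto 1
      refine tendsto_nhdsWithin_of_tendsto_nhds_of_eventually_within _
        (hc.mono_left nhdsWithin_le_nhds) ?_
      filter_upwards [self_mem_nhdsWithin] with s hs
      exact Set.mem_Ioi.mpr (sub_pos.mpr hs)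
    simpa [hr0] using hinv.atTop_mul_const ha0
  have h2 : Tendsto (fun s : ℝ => ∑ j ∈ Finset.univ.erase (0 : Fin (n+1)), (1 - s * r j)⁻¹ * a j)
      (𝓝[<] (1:ℝ)) (𝓝 (∑ j ∈ Finset.univ.erase (0 : Fin (n+1)), (1 - r j)⁻¹ * a j)) := by
    refine tendsto_finset_sum _ fun j hj => ?_
    have hj0 : j ≠ 0 := Finset.ne_of_mem_erase hj
    have hne : (1 : ℝ) - r j ≠ 0 := sub_ne_zero.mpr (hrlt j hj0).ne'
    have hc : Tendsto (fun s : ℝ => 1 - s * r j) (𝓝 (1:ℝ)) (𝓝 (1 - r j)) := by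
      have hcont : Continuous (fun s : ℝ => 1 - s * r j) := by continuity
      simpa using hcont.tendsto 1
    exact ((hc.inv₀ hne).mul_const _).mono_left nhdsWithin_le_nhds
  refine (h1.atTop_add h2).congr' ?_
  filter_upwards [Ioo_mem_nhdsLT_of_mem (by norm_num : (1:ℝ) ∈ Set.Ioc 0 1)] with s hs
  rw [key s hs, ← Finset.add_sum_erase _ _ (Finset.mem_univ (0 : Fin (n+1)))]
end

section
/- Let n ≥ 1 and let T, U, W be real n×n matrices and d : Fin n → ℝ such that W * U = 1 and T = U * Matrix.diagonal d * W. Write u₀ j := U j 0, assume u₀ j > 0 for all j, d 0 > 0, and |d j| < d 0 for all j ≠ 0. Define T̂ := (d 0)⁻¹ • ((Matrix.diagonal u₀)⁻¹ * T * Matrix.diagonal u₀) and π m := U m 0 * W 0 m. Then for every k and all indices m', m: (T̂^k) m' m - π m = (U m 0 / U m' 0) * ∑_{j ≠ 0} (d j / d 0)^k * U m' j * W j m, and consequently Tendsto (fun k => (T̂^k) m' m) atTop (𝓝 (π m)). -/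
open Matrix Filter Topology

/-! With `V := (diagonal u)⁻¹ * U` and `V' := W * diagonal u`, the renormalized matrix is
`T̂ = V * diagonal (d / d 0) * V'` and `V' * V = 1`, so `T̂ ^ k = V * diagonal ((d / d 0) ^ k) * V'`.
The `j = 0` term of the resulting sum is `π m`; every other term carries a factor
`(d j / d 0) ^ k → 0`. -/

namespace Matrix

variable {ι R : Type*} [Fintype ι] [DecidableEq ι]

theorem mul_diagonal_mul_apply [Semiring R] (A B : Matrix ι ι R) (v : ι → R) (i l : ι) :
    (A * diagonal v * B) i l = ∑ j, A i j * v j * B j l := by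
  rw [mul_apply]
  simp only [mul_diagonal]

theorem pow_mul_diagonal_mul_of_mul_eq_one [CommRing R] {U W : Matrix ι ι R} (hWU : W * U = 1)
    (d : ι → R) (k : ℕ) : (U * diagonal d * W) ^ k = U * diagonal (d ^ k) * W := by
  simpa [diagonal_pow] using
    Units.conj_pow ⟨U, W, mul_eq_one_comm.mp hWU, hWU⟩ (diagonal d) k

theorem diagonal_inv_mul_diagonal [Field R] {u : ι → R} (hu : ∀ j, u j ≠ 0) :
    diagonal u⁻¹ * diagonal u = 1 := by
  rw [diagonal_mul_diagonal, ← diagonal_one]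
  exact congrArg diagonal (funext fun j => inv_mul_cancel₀ (hu j))

theorem pow_smul_diagonal_conj_apply [Field R] {U W : Matrix ι ι R} (hWU : W * U = 1)
    {u : ι → R} (hu : ∀ j, u j ≠ 0) (c : R) (d : ι → R) (k : ℕ) (i l : ι) :
    ((c • ((diagonal u)⁻¹ * (U * diagonal d * W) * diagonal u)) ^ k) i l
      = u l / u i * ∑ j, (c * d j) ^ k * U i j * W j l := by
  have hleft := diagonal_inv_mul_diagonal hu
  have hconj : c • ((diagonal u)⁻¹ * (U * diagonal d * W) * diagonal u)
      = (diagonal u⁻¹ * U) * diagonal (c • d) * (W * diagonal u) := by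
    rw [inv_eq_left_inv hleft, diagonal_smul]
    simp only [Matrix.mul_smul, Matrix.smul_mul, Matrix.mul_assoc]
  have hVV : (W * diagonal u) * (diagonal u⁻¹ * U) = 1 := by
    rw [Matrix.mul_assoc, ← Matrix.mul_assoc (diagonal u), mul_eq_one_comm.mp hleft,
      Matrix.one_mul, hWU]
  rw [hconj, pow_mul_diagonal_mul_of_mul_eq_one hVV, mul_diagonal_mul_apply, Finset.mul_sum]
  refine Finset.sum_congr rfl fun j _ => ?_
  simp only [diagonal_mul, mul_diagonal, Pi.pow_apply, Pi.smul_apply, Pi.inv_apply, smul_eq_mul]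
  field_simp

end Matrix

theorem tendsto_sum_pow_mul_nhds_zero {ι R : Type*} [NormedRing R] (s : Finset ι) {r : ι → R}
    (hr : ∀ j ∈ s, ‖r j‖ < 1) (a : ι → R) :
    Tendsto (fun k : ℕ => ∑ j ∈ s, r j ^ k * a j) atTop (𝓝 0) := by
  simpa using tendsto_finsetSum s fun j hj =>
    (tendsto_pow_atTop_nhds_zero_of_norm_lt_one (hr j hj)).mul_const (a j)

/-- The iterated transition probabilities of the renormalized chain converge to
the stationary distribution `π m = U m 0 * W 0 m`, with an explicit spectral
formula for the error. -/
theorem iterates_converge_to_stationary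
    {n : ℕ} (T U W : Matrix (Fin (n + 1)) (Fin (n + 1)) ℝ) (d : Fin (n + 1) → ℝ)
    (hWU : W * U = 1) (hT : T = U * Matrix.diagonal d * W)
    (hu : ∀ j, 0 < U j 0) (hd : 0 < d 0) (hdlt : ∀ j, j ≠ 0 → |d j| < d 0)
    (m' m : Fin (n + 1)) :
    (∀ k : ℕ,
      (((d 0)⁻¹ • ((Matrix.diagonal (fun j => U j 0))⁻¹ * T *
          Matrix.diagonal (fun j => U j 0))) ^ k) m' m - U m 0 * W 0 m
        = (U m 0 / U m' 0) *
            ∑ j ∈ Finset.univ.erase 0, (d j / d 0) ^ k * U m' j * W j m) ∧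
    Tendsto (fun k : ℕ =>
        (((d 0)⁻¹ • ((Matrix.diagonal (fun j => U j 0))⁻¹ * T *
            Matrix.diagonal (fun j => U j 0))) ^ k) m' m)
      atTop (𝓝 (U m 0 * W 0 m)) := by
  have herr : ∀ k : ℕ,
      (((d 0)⁻¹ • ((diagonal (fun j => U j 0))⁻¹ * T * diagonal (fun j => U j 0))) ^ k) m' m
          - U m 0 * W 0 m
        = (U m 0 / U m' 0) * ∑ j ∈ Finset.univ.erase 0, (d j / d 0) ^ k * U m' j * W j m := by
    intro k
    rw [hT, pow_smul_diagonal_conj_apply hWU (fun j => (hu j).ne'),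
      ← Finset.add_sum_erase _ _ (Finset.mem_univ 0), inv_mul_cancel₀ hd.ne', one_pow]
    simp only [inv_mul_eq_div]
    field_simp [(hu m').ne']
    ring
  have hratio : ∀ j ∈ Finset.univ.erase 0, ‖d j / d 0‖ < 1 := fun j hj => by
    rw [Real.norm_eq_abs, abs_div, abs_of_pos hd, div_lt_one hd]
    exact hdlt j (Finset.ne_of_mem_erase hj)
  have herror := (tendsto_sum_pow_mul_nhds_zero _ hratio fun j => U m' j * W j m).const_mul
    (U m 0 / U m' 0)
  simp only [← mul_assoc, mul_zero, ← herr] at herror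
  exact ⟨herr, tendsto_sub_nhds_zero_iff.mp herror⟩
end

section
/- Let n ≥ 2 and let T, U, W be real n×n matrices and d : Fin n → ℝ such that W * U = 1 and T = U * Matrix.diagonal d * W. Write u₀ j := U j 0, assume u₀ j > 0 for all j, d 0 > d 1 > 0, and |d j| < d 1 for all j ∉ {0, 1}. Define T̂ := (d 0)⁻¹ • ((Matrix.diagonal u₀)⁻¹ * T * Matrix.diagonal u₀) and π m := U m 0 * W 0 m. Then for all indices m', m: Tendsto (fun k => ((T̂^k) m' m - π m) / (d 1 / d 0)^k) atTop (𝓝 ((U m 0 / U m' 0) * U m' 1 * W 1 m)); in particular the convergence of (T̂^k) m' m to the stationary probability π m is geometric with rate governed by the second largest eigenvalue d 1. -/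
open Matrix Filter Topology

/-- The convergence of the iterated transition probabilities to the stationary
distribution is geometric, at rate governed by the second largest eigenvalue
`d 1`. -/
theorem geometric_convergence_rate_second_eigenvalue
    {n : ℕ} (T U W : Matrix (Fin (n + 2)) (Fin (n + 2)) ℝ) (d : Fin (n + 2) → ℝ)
    (hWU : W * U = 1) (hT : T = U * Matrix.diagonal d * W)
    (hu : ∀ j, 0 < U j 0) (hd10 : d 1 < d 0) (hd1 : 0 < d 1)
    (hdlt : ∀ j, j ≠ 0 → j ≠ 1 → |d j| < d 1)
    (m' m : Fin (n + 2)) :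
    Tendsto (fun k : ℕ =>
        ((((d 0)⁻¹ • ((Matrix.diagonal (fun j => U j 0))⁻¹ * T *
            Matrix.diagonal (fun j => U j 0))) ^ k) m' m - U m 0 * W 0 m)
          / (d 1 / d 0) ^ k)
      atTop (𝓝 ((U m 0 / U m' 0) * U m' 1 * W 1 m)) := by
  have hd0 : (0:ℝ) < d 0 := hd1.trans hd10
  have hd0' : d 0 ≠ 0 := ne_of_gt hd0
  have hd1' : d 1 ≠ 0 := ne_of_gt hd1
  set v : Fin (n+2) → ℝ := fun j => U j 0 with hv
  have hvne : ∀ j, v j ≠ 0 := fun j => ne_of_gt (hu j)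
  have hUW : U * W = 1 := mul_eq_one_comm.mp hWU
  set Di : Matrix (Fin (n+2)) (Fin (n+2)) ℝ := Matrix.diagonal (fun j => (v j)⁻¹) with hDi
  have hDD : Matrix.diagonal v * Di = 1 := by
    rw [hDi, Matrix.diagonal_mul_diagonal]
    have : (fun j => v j * (v j)⁻¹) = fun _ => (1:ℝ) :=
      funext fun j => mul_inv_cancel₀ (hvne j)
    rw [this, Matrix.diagonal_one]
  have hDDi : Di * Matrix.diagonal v = 1 := mul_eq_one_comm.mp hDD
  have hDinv : (Matrix.diagonal v)⁻¹ = Di := Matrix.inv_eq_right_inv hDD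
  -- the normalized matrix
  have hThat : (d 0)⁻¹ • ((Matrix.diagonal v)⁻¹ * T * Matrix.diagonal v)
      = Di * (U * Matrix.diagonal (fun j => d j / d 0) * W) * Matrix.diagonal v := by
    rw [hDinv, hT]
    have : Matrix.diagonal (fun j => d j / d 0) = (d 0)⁻¹ • Matrix.diagonal d := by
      ext i j
      by_cases h : i = j <;>
        simp [Matrix.diagonal_apply, h, div_eq_inv_mul]
    rw [this]
    simp only [Matrix.mul_smul, Matrix.smul_mul]
  -- powers
  have cancelD : ∀ X : Matrix (Fin (n+2)) (Fin (n+2)) ℝ,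
      Matrix.diagonal v * (Di * X) = X := fun X => by
    rw [← Matrix.mul_assoc, hDD, Matrix.one_mul]
  have cancelW : ∀ X : Matrix (Fin (n+2)) (Fin (n+2)) ℝ, W * (U * X) = X := fun X => by
    rw [← Matrix.mul_assoc, hWU, Matrix.one_mul]
  have hpow : ∀ k : ℕ,
      (Di * (U * Matrix.diagonal (fun j => d j / d 0) * W) * Matrix.diagonal v) ^ k
      = Di * (U * Matrix.diagonal (fun j => (d j / d 0) ^ k) * W) * Matrix.diagonal v := by
    intro k
    induction k with
    | zero =>
      simp only [pow_zero]
      rw [show Matrix.diagonal (fun _ : Fin (n+2) => ((1:ℝ))) = 1 from Matrix.diagonal_one,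
        Matrix.mul_one, hUW, Matrix.mul_one, hDDi]
    | succ k ih =>
      rw [pow_succ, ih]
      simp only [Matrix.mul_assoc]
      rw [cancelD, cancelW, ← Matrix.mul_assoc (Matrix.diagonal fun j => (d j / d 0) ^ k),
        Matrix.diagonal_mul_diagonal]
      have : (fun i => (d i / d 0) ^ k * (d i / d 0)) = fun i => (d i / d 0) ^ (k + 1) :=
        funext fun i => (pow_succ _ _).symm
      rw [this]
  -- entrywise formula
  have hentry : ∀ k : ℕ,
      ((((d 0)⁻¹ • ((Matrix.diagonal v)⁻¹ * T * Matrix.diagonal v)) ^ k) m' m)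
      = (v m')⁻¹ * (∑ j, U m' j * (d j / d 0) ^ k * W j m) * v m := by
    intro k
    rw [hThat, hpow k, Matrix.mul_diagonal, Matrix.diagonal_mul, Matrix.mul_apply]
    simp only [Matrix.mul_diagonal]
  -- rewrite the function as a finite sum of geometric terms
  have hm' : U m' 0 ≠ 0 := hvne m'
  have key : ∀ k : ℕ,
      (((((d 0)⁻¹ • ((Matrix.diagonal v)⁻¹ * T * Matrix.diagonal v)) ^ k) m' m
          - U m 0 * W 0 m) / (d 1 / d 0) ^ k)
      = ∑ j ∈ Finset.univ.erase 0,
          ((U m 0 / U m' 0) * (U m' j * W j m)) * (d j / d 1) ^ k := by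
    intro k
    rw [hentry k,
      ← Finset.add_sum_erase Finset.univ (fun j => U m' j * (d j / d 0) ^ k * W j m)
        (Finset.mem_univ 0), div_self hd0', one_pow]
    set S := ∑ j ∈ Finset.univ.erase 0, U m' j * (d j / d 0) ^ k * W j m with hS
    have hstep : (v m')⁻¹ * (U m' 0 * 1 * W 0 m + S) * v m - U m 0 * W 0 m
        = (v m / v m') * S := by
      show (U m' 0)⁻¹ * (U m' 0 * 1 * W 0 m + S) * U m 0 - U m 0 * W 0 m
        = (U m 0 / U m' 0) * S
      field_simp
      ring
    rw [hstep, hS, Finset.mul_sum, Finset.sum_div]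
    refine Finset.sum_congr rfl fun j hj => ?_
    show (U m 0 / U m' 0) * (U m' j * (d j / d 0) ^ k * W j m) / (d 1 / d 0) ^ k = _
    rw [div_pow, div_pow, div_pow]
    field_simp
  have hlim : Tendsto (fun k : ℕ => ∑ j ∈ (Finset.univ.erase (0 : Fin (n+2))),
      ((U m 0 / U m' 0) * (U m' j * W j m)) * (d j / d 1) ^ k) atTop
      (𝓝 (∑ j ∈ (Finset.univ.erase (0 : Fin (n+2))),
        if j = 1 then (U m 0 / U m' 0) * (U m' 1 * W 1 m) else 0)) := by
    refine tendsto_finset_sum _ fun j hj => ?_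
    by_cases h1 : j = 1
    · subst h1
      simp only [if_pos rfl, div_self hd1', one_pow, mul_one]
      exact tendsto_const_nhds
    · rw [if_neg h1]
      have habs : |d j / d 1| < 1 := by
        rw [abs_div, abs_of_pos hd1, div_lt_one hd1]
        exact hdlt j (Finset.ne_of_mem_erase hj) h1
      have := (tendsto_pow_atTop_nhds_zero_of_abs_lt_one habs).const_mul
        ((U m 0 / U m' 0) * (U m' j * W j m))
      simpa using this
  have hsum : (∑ j ∈ (Finset.univ.erase (0 : Fin (n+2))),
      if j = 1 then (U m 0 / U m' 0) * (U m' 1 * W 1 m) else 0)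
      = (U m 0 / U m' 0) * U m' 1 * W 1 m := by
    rw [Finset.sum_ite_eq' ((Finset.univ.erase (0 : Fin (n+2)))) 1
      (fun _ => (U m 0 / U m' 0) * (U m' 1 * W 1 m))]
    simp [Finset.mem_erase, mul_assoc]
  rw [hsum] at hlim
  exact Tendsto.congr (fun k => (key k).symm) hlim
end
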